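/- arXiv:2312.02032 — 5 statements merged into one kernel-verified Lean document; each statement's English description precedes it below -/
import Mathlib

section
/- Let m > 0, ∂m > 0, α' real, Δ > 0. Any real root x of x² ∂m - 2 m α' x + (4Δ/9) ∂m = 0 given by the minus sign in the quadratic formula, x = (m α'/∂m)(1 - √(1 - 4Δ(∂m)²/(9m²α'²))), satisfies |x| ≤ 2√Δ/3. -/
open Real

theorem earliest_shell_crossing_root_bound
    (m dm a' Δ x : ℝ) (hm : 0 < m) (hdm : 0 < dm) (hΔ : 0 < Δ) (ha' : a' ≠ 0)
    (hdisc : 4 * Δ * dm ^ 2 / (9 * m ^ 2 * a' ^ 2) ≤ 1)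
    (hx : x = (m * a' / dm) *
      (1 - Real.sqrt (1 - 4 * Δ * dm ^ 2 / (9 * m ^ 2 * a' ^ 2)))) :
    |x| ≤ 2 * Real.sqrt Δ / 3 := by
  set u := 4 * Δ * dm ^ 2 / (9 * m ^ 2 * a' ^ 2) with hu
  have ha2 : 0 < a' ^ 2 := by positivity
  have hu0 : 0 < u := by positivity
  have h1u : 0 ≤ 1 - u := by linarith
  have hs0 : 0 ≤ Real.sqrt (1 - u) := Real.sqrt_nonneg _
  have hs2 : Real.sqrt (1 - u) ^ 2 = 1 - u := Real.sq_sqrt h1u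
  have hkey0 : 0 ≤ 1 - Real.sqrt (1 - u) := by nlinarith
  have hkey : 1 - Real.sqrt (1 - u) ≤ u := by nlinarith
  have habs : |x| ≤ (m * |a'| / dm) * u := by
    rw [hx, abs_mul, abs_of_nonneg hkey0, abs_div, abs_mul,
      abs_of_pos hm, abs_of_pos hdm]
    have h1 : 0 ≤ m * |a'| / dm := by positivity
    exact mul_le_mul_of_nonneg_left hkey h1
  have ht : Real.sqrt Δ ^ 2 = Δ := Real.sq_sqrt hΔ.le
  have ht0 : 0 < Real.sqrt Δ := Real.sqrt_pos.mpr hΔ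
  have ha'0 : 0 < |a'| := abs_pos.mpr ha'
  have ha2' : |a'| ^ 2 = a' ^ 2 := sq_abs a'
  -- from hdisc : 4Δ dm² ≤ 9 m² a'², hence 2√Δ dm ≤ 3 m |a'|
  have hd : 4 * Δ * dm ^ 2 ≤ 9 * m ^ 2 * a' ^ 2 := by
    rw [hu, div_le_one (by positivity)] at hdisc
    linarith
  have hlin : 2 * Real.sqrt Δ * dm ≤ 3 * (m * |a'|) := by
    have hsq : (2 * Real.sqrt Δ * dm) ^ 2 ≤ (3 * (m * |a'|)) ^ 2 := by
      nlinarith [hd, ht, ha2']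
    exact (pow_le_pow_iff_left₀ (by positivity) (by positivity) two_ne_zero).mp hsq
  have hgoal : (m * |a'| / dm) * u ≤ 2 * Real.sqrt Δ / 3 := by
    rw [hu]
    rw [div_mul_div_comm, div_le_div_iff₀ (by positivity) (by norm_num)]
    have h6 : (0:ℝ) ≤ 6 * Real.sqrt Δ * dm * m * |a'| := by positivity
    have hp2 : 12 * Δ * dm ^ 2 * (m * |a'|) ≤ 18 * Real.sqrt Δ * dm * m ^ 2 * a' ^ 2 := by
      calc 12 * Δ * dm ^ 2 * (m * |a'|)
          = 6 * Real.sqrt Δ * dm * m * |a'| * (2 * Real.sqrt Δ * dm) := by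
            linear_combination (-12 * dm ^ 2 * m * |a'|) * ht
        _ ≤ 6 * Real.sqrt Δ * dm * m * |a'| * (3 * (m * |a'|)) :=
            mul_le_mul_of_nonneg_left hlin h6
        _ = 18 * Real.sqrt Δ * dm * m ^ 2 * a' ^ 2 := by
            linear_combination (18 * Real.sqrt Δ * dm * m ^ 2) * ha2'
    linarith [hp2]
  exact habs.trans hgoal
end

section
/- The function r(t) = (2Gm((9/4)(t-α)² + Δ))^{1/3}, with G, m, Δ > 0, satisfies the ODE ṙ² = r²·(2Gm/r³)·(1 - Δ·(2Gm/r³)) for all t. -/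
/-!
Write `u t = 2Gm((9/4)(t - α)² + Δ)`, so that `r = u^{1/3}` and `r³ = u`. The chain rule gives
`ṙ = u̇ / (3 r²)` with `u̇ = 2Gm (9/2)(t - α)`, and the equation reduces to the polynomial identity
`(81/4)(2Gm)²(t - α)² = 9 · 2Gm (r³ - 2Gm Δ)`, which is `r³ = u` again.
-/

open Real

theorem rpow_one_third_pow_three {x : ℝ} (hx : 0 ≤ x) : (x ^ (1 / 3 : ℝ)) ^ 3 = x := by
  simpa [one_div] using rpow_inv_natCast_pow (n := 3) hx (by norm_num)

theorem HasDerivAt.rpow_one_third {f : ℝ → ℝ} {f' x : ℝ} (hf : HasDerivAt f f' x)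
    (hx : 0 < f x) :
    HasDerivAt (fun y => f y ^ (1 / 3 : ℝ)) (f' / (3 * (f x ^ (1 / 3 : ℝ)) ^ 2)) x := by
  refine (hf.rpow_const (p := 1 / 3) (Or.inl hx.ne')).congr_deriv ?_
  set a := f x ^ (1 / 3 : ℝ)
  have ha : 0 < a := rpow_pos_of_pos hx _
  have hcube : a ^ 3 = f x := rpow_one_third_pow_three hx.le
  rw [rpow_sub_one hx.ne']
  field_simp
  linear_combination f' * hcube

theorem friedmann_identity_of_pow_three_eq {c Δ s R : ℝ} (hR : R ≠ 0)
    (hR3 : R ^ 3 = c * ((9 / 4) * s ^ 2 + Δ)) :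
    (c * ((9 / 2) * s) / (3 * R ^ 2)) ^ 2 = R ^ 2 * (c / R ^ 3) * (1 - Δ * (c / R ^ 3)) := by
  field_simp
  linear_combination (-36 * c) * hR3

theorem effective_ltb_ode
    (G m Δ α : ℝ) (hG : 0 < G) (hm : 0 < m) (hΔ : 0 < Δ)
    (r : ℝ → ℝ)
    (hr : ∀ t, r t = (2 * G * m * ((9 / 4) * (t - α) ^ 2 + Δ)) ^ ((1 : ℝ) / 3)) :
    ∀ t, (deriv r t) ^ 2 =
      (r t) ^ 2 * (2 * G * m / (r t) ^ 3) * (1 - Δ * (2 * G * m / (r t) ^ 3)) := by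
  intro t
  have hu : 0 < 2 * G * m * ((9 / 4) * (t - α) ^ 2 + Δ) := by positivity
  have hu' : HasDerivAt (fun t => 2 * G * m * ((9 / 4) * (t - α) ^ 2 + Δ))
      (2 * G * m * ((9 / 2) * (t - α))) t := by
    refine (((((hasDerivAt_id t).sub_const α).pow 2).const_mul (9 / 4 : ℝ)).add_const Δ
      |>.const_mul (2 * G * m)).congr_deriv ?_
    simp only [id_eq]
    ring
  have hr' : HasDerivAt r _ t := funext hr ▸ hu'.rpow_one_third hu
  rw [hr'.deriv, ← hr t]
  exact friedmann_identity_of_pow_three_eq (hr t ▸ (rpow_pos_of_pos hu _).ne')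
    (hr t ▸ rpow_one_third_pow_three hu.le)
end

section
/- With ρ_c = 3/(8πGΔ), average density ϱ̄₁ = 3m(R₁)/(4πR₁³), local density ϱ₁ = ∂_R m(R₁)/(4πR₁²) > 0, and δϱ₁ = ϱ₁ - ϱ̄₁, assuming 0 < ϱ̄₁ < ρ_c, the quantity m∂_R α/∂_R m evaluated at R₁ equals -(√Δ/3)·(δϱ₁/ϱ₁)·[√((ϱ̄₁/ρ_c)(1 - ϱ̄₁/ρ_c))]^{-1}. -/
open Real

theorem shell_crossing_density_identity
    (G Δ t₀ R₁ : ℝ) (hG : 0 < G) (hΔ : 0 < Δ) (hR₁ : 0 < R₁)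
    (m : ℝ → ℝ) (hm : Differentiable ℝ m)
    (hmpos : 0 < m R₁) (hdm : 0 < deriv m R₁)
    (ρc avg loc dloc : ℝ)
    (hρc : ρc = 3 / (8 * Real.pi * G * Δ))
    (havg : avg = 3 * m R₁ / (4 * Real.pi * R₁ ^ 3))
    (hloc : loc = deriv m R₁ / (4 * Real.pi * R₁ ^ 2))
    (hdloc : dloc = loc - avg)
    (havg_pos : 0 < avg) (havg_lt : avg < ρc)
    (α : ℝ → ℝ)
    (hα : ∀ R, α R = t₀ + Real.sqrt ((4 / 9) * (R ^ 3 / (2 * G * m R) - Δ))) :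
    m R₁ * deriv α R₁ / deriv m R₁ =
      -(Real.sqrt Δ / 3) * (dloc / loc) *
        (Real.sqrt ((avg / ρc) * (1 - avg / ρc)))⁻¹ := by
  have hπ := Real.pi_pos
  set M := m R₁ with hM
  set M' := deriv m R₁ with hM'
  have hMne : (2 : ℝ) * G * M ≠ 0 := by positivity
  -- key inequality: Δ * (2*G*M) < R₁^3
  have key : Δ * (2 * G * M) < R₁ ^ 3 := by
    rw [havg, hρc, div_lt_div_iff₀ (by positivity) (by positivity)] at havg_lt
    nlinarith [Real.pi_pos, mul_pos hG hΔ, mul_pos hG hmpos]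
  have hA : 0 < R₁ ^ 3 / (2 * G * M) - Δ := by
    rw [sub_pos, lt_div_iff₀ (by positivity)]
    linarith
  set A := R₁ ^ 3 / (2 * G * M) - Δ with hAdef
  -- derivative of α
  have h1 : HasDerivAt (fun R : ℝ => R ^ 3) (3 * R₁ ^ 2) R₁ := by
    simpa using hasDerivAt_pow 3 R₁
  have h2 : HasDerivAt (fun R => 2 * G * m R) (2 * G * M') R₁ :=
    ((hm R₁).hasDerivAt).const_mul (2 * G)
  have hdiv : HasDerivAt (fun R => R ^ 3 / (2 * G * m R))
      ((3 * R₁ ^ 2 * (2 * G * M) - R₁ ^ 3 * (2 * G * M')) / (2 * G * M) ^ 2) R₁ :=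
    h1.div h2 hMne
  have hg : HasDerivAt (fun R => (4 / 9 : ℝ) * (R ^ 3 / (2 * G * m R) - Δ))
      ((4 / 9) * ((3 * R₁ ^ 2 * (2 * G * M) - R₁ ^ 3 * (2 * G * M')) / (2 * G * M) ^ 2)) R₁ :=
    (hdiv.sub_const Δ).const_mul (4 / 9)
  have hAne : (4 / 9 : ℝ) * A ≠ 0 := by positivity
  have hsq : HasDerivAt Real.sqrt (1 / (2 * Real.sqrt ((4 / 9) * A))) ((4 / 9) * A) :=
    Real.hasDerivAt_sqrt hAne
  have hcomp : HasDerivAt (fun R => Real.sqrt ((4 / 9 : ℝ) * (R ^ 3 / (2 * G * m R) - Δ)))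
      (1 / (2 * Real.sqrt ((4 / 9) * A)) *
        ((4 / 9) * ((3 * R₁ ^ 2 * (2 * G * M) - R₁ ^ 3 * (2 * G * M')) / (2 * G * M) ^ 2))) R₁ :=
    HasDerivAt.comp R₁ hsq hg
  have hαfun : (fun R => t₀ + Real.sqrt ((4 / 9 : ℝ) * (R ^ 3 / (2 * G * m R) - Δ))) = α := by
    funext R; rw [hα]
  have hα' : HasDerivAt α
      (1 / (2 * Real.sqrt ((4 / 9) * A)) *
        ((4 / 9) * ((3 * R₁ ^ 2 * (2 * G * M) - R₁ ^ 3 * (2 * G * M')) / (2 * G * M) ^ 2))) R₁ := by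
    rw [← hαfun]
    exact hcomp.const_add t₀
  rw [hα'.deriv]
  -- simplify square roots
  have hs49 : Real.sqrt ((4 / 9) * A) = (2 / 3) * Real.sqrt A := by
    rw [show (4 / 9 : ℝ) = (2 / 3) ^ 2 by norm_num, Real.sqrt_mul (by positivity),
      Real.sqrt_sq (by norm_num : (0:ℝ) ≤ 2/3)]
  have hsA : 0 < Real.sqrt A := Real.sqrt_pos.mpr hA
  have hsΔ : 0 < Real.sqrt Δ := Real.sqrt_pos.mpr hΔ
  have eΔ : Real.sqrt Δ ^ 2 = Δ := Real.sq_sqrt hΔ.le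
  have eA : Real.sqrt A ^ 2 = A := Real.sq_sqrt hA.le
  have hprod : (avg / ρc) * (1 - avg / ρc) =
      (Real.sqrt Δ * (2 * G * M / R₁ ^ 3) * Real.sqrt A) ^ 2 := by
    have : (Real.sqrt Δ * (2 * G * M / R₁ ^ 3) * Real.sqrt A) ^ 2 =
        Δ * ((2 * G * M / R₁ ^ 3) ^ 2 * A) := by
      rw [mul_pow, mul_pow, eΔ, eA]; ring
    rw [this, havg, hρc, hAdef]
    field_simp
    ring
  have hsqrtprod : Real.sqrt ((avg / ρc) * (1 - avg / ρc)) =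
      Real.sqrt Δ * (2 * G * M / R₁ ^ 3) * Real.sqrt A := by
    rw [hprod, Real.sqrt_sq (by positivity)]
  rw [hsqrtprod, hs49, hdloc, hloc, havg]
  have hlocne : M' / (4 * Real.pi * R₁ ^ 2) ≠ 0 := by positivity
  field_simp
  ring
end

section
/- Under the hypotheses of the previous identity, the shell-crossing existence condition m|∂_R α|/∂_R m ≥ 2√Δ/3 at R₁ is equivalent to |δϱ₁|/ϱ₁ ≥ 2√((ϱ̄₁/ρ_c)(1 - ϱ̄₁/ρ_c)). -/
/-!
Put `f = R₁³ / (2 G m(R₁))`. Then `ϱ̄₁ / ρ_c = Δ / f`, and `α = t₀ + (2/3) √(f - Δ)` has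
`α' = f' / (3 √(f - Δ))` with `f' / f = 3 / R - m' / m = (m' / m) (ϱ̄₁ / ϱ₁ - 1)`. Hence
`m |α'| / m' = f (|δϱ₁| / ϱ₁) / (3 √(f - Δ))`, and both conditions say
`|δϱ₁| / ϱ₁ ≥ 2 √Δ √(f - Δ) / f = 2 √((ϱ̄₁ / ρ_c) (1 - ϱ̄₁ / ρ_c))`.
-/

open Real

theorem sqrt_div_mul_one_sub_div {Δ f : ℝ} (hΔ : 0 ≤ Δ) (hf : Δ ≤ f) :
    √((Δ / f) * (1 - Δ / f)) = √Δ * √(f - Δ) / f := by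
  rcases hΔ.eq_or_lt with rfl | hΔ
  · simp
  have hf0 : 0 < f := hΔ.trans_le hf
  rw [show (Δ / f) * (1 - Δ / f) = Δ * (f - Δ) / f ^ 2 by field_simp,
    sqrt_div' _ (sq_nonneg f), sqrt_mul hΔ.le, sqrt_sq hf0.le]

theorem two_sqrt_div_three_le_iff {Δ f q : ℝ} (hΔ : 0 < Δ) (hf : Δ < f) :
    2 * √Δ / 3 ≤ f * q / (3 * √(f - Δ)) ↔ 2 * √((Δ / f) * (1 - Δ / f)) ≤ q := by
  have hf0 : 0 < f := hΔ.trans hf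
  rw [sqrt_div_mul_one_sub_div hΔ.le hf.le, le_div_iff₀ (by positivity), ← mul_div_assoc,
    div_le_iff₀ hf0]
  constructor <;> intro h <;> nlinarith

theorem hasDerivAt_const_add_sqrt_four_ninths_sub {α f : ℝ → ℝ} {t₀ Δ f' R : ℝ}
    (hα : ∀ R, α R = t₀ + √((4 / 9) * (f R - Δ))) (hf : HasDerivAt f f' R) (hΔ : Δ < f R) :
    HasDerivAt α (f' / (3 * √(f R - Δ))) R := by
  rw [show α = fun R => t₀ + √((4 / 9) * (f R - Δ)) from funext hα]
  have hpos : 0 < (4 / 9) * (f R - Δ) := by linarith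
  refine (((hasDerivAt_sqrt hpos.ne').comp R ((hf.sub_const Δ).const_mul (4 / 9))).const_add
    t₀).congr_deriv ?_
  rw [sqrt_mul (by norm_num), show √(4 / 9 : ℝ) = 2 / 3 by
    rw [show (4 / 9 : ℝ) = (2 / 3) ^ 2 by norm_num, sqrt_sq (by norm_num)]]
  field_simp
  ring

theorem hasDerivAt_cube_div_const_mul {m : ℝ → ℝ} {c m' R : ℝ} (hm : HasDerivAt m m' R)
    (hc : c ≠ 0) (hR : R ≠ 0) (hmR : m R ≠ 0) :
    HasDerivAt (fun R => R ^ 3 / (c * m R)) (R ^ 3 / (c * m R) * (3 / R - m' / m R)) R := by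
  refine ((hasDerivAt_pow 3 R).div (hm.const_mul c) (mul_ne_zero hc hmR)).congr_deriv ?_
  field_simp
  ring

theorem shell_crossing_condition_equivalent_general
    (G Δ t₀ R₁ : ℝ) (hG : 0 < G) (hΔ : 0 < Δ) (hR₁ : 0 < R₁)
    (m : ℝ → ℝ) (hm : Differentiable ℝ m)
    (hmpos : 0 < m R₁) (hdm : 0 < deriv m R₁)
    (ρc avg loc dloc : ℝ)
    (hρc : ρc = 3 / (8 * Real.pi * G * Δ))
    (havg : avg = 3 * m R₁ / (4 * Real.pi * R₁ ^ 3))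
    (hloc : loc = deriv m R₁ / (4 * Real.pi * R₁ ^ 2))
    (hdloc : dloc = loc - avg)
    (havg_lt : avg < ρc)
    (α : ℝ → ℝ)
    (hα : ∀ R, α R = t₀ + Real.sqrt ((4 / 9) * (R ^ 3 / (2 * G * m R) - Δ))) :
    m R₁ * |deriv α R₁| / deriv m R₁ ≥ 2 * Real.sqrt Δ / 3 ↔
      |dloc| / loc ≥ 2 * Real.sqrt ((avg / ρc) * (1 - avg / ρc)) := by
  set M := m R₁
  set M' := deriv m R₁
  set f := R₁ ^ 3 / (2 * G * M) with hf
  have hratio : avg / ρc = Δ / f := by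
    rw [havg, hρc, hf]; field_simp; ring
  have hf_pos : 0 < f := by positivity
  have hΔf : Δ < f := by
    rwa [← div_lt_one hf_pos, ← hratio, div_lt_one (by rw [hρc]; positivity)]
  have hloc_pos : 0 < loc := by rw [hloc]; positivity
  have hrelative : |dloc| / loc = |3 * M / (R₁ * M') - 1| := by
    rw [← abs_of_pos hloc_pos, ← abs_div, hdloc, abs_sub_comm, sub_div, div_self hloc_pos.ne',
      hloc, havg]
    field_simp
  have hα' := hasDerivAt_const_add_sqrt_four_ninths_sub hα
    (hasDerivAt_cube_div_const_mul (hm R₁).hasDerivAt (by positivity) hR₁.ne' hmpos.ne') hΔf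
  have hlhs : M * |deriv α R₁| / M' = f * (|dloc| / loc) / (3 * √(f - Δ)) := by
    have hlogDeriv : 3 / R₁ - M' / M = M' / M * (3 * M / (R₁ * M') - 1) := by field_simp
    rw [hα'.deriv, hrelative, hlogDeriv, abs_div, abs_mul, abs_mul, abs_of_pos hf_pos,
      abs_of_pos (by positivity : 0 < M' / M), abs_of_pos (by positivity : 0 < 3 * √(f - Δ))]
    field_simp
  rw [ge_iff_le, ge_iff_le, hlhs, hratio]
  exact two_sqrt_div_three_le_iff hΔ hΔf

theorem shell_crossing_condition_equivalent
    (G Δ t₀ R₁ : ℝ) (hG : 0 < G) (hΔ : 0 < Δ) (hR₁ : 0 < R₁)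
    (m : ℝ → ℝ) (hm : Differentiable ℝ m)
    (hmpos : 0 < m R₁) (hdm : 0 < deriv m R₁)
    (ρc avg loc dloc : ℝ)
    (hρc : ρc = 3 / (8 * Real.pi * G * Δ))
    (havg : avg = 3 * m R₁ / (4 * Real.pi * R₁ ^ 3))
    (hloc : loc = deriv m R₁ / (4 * Real.pi * R₁ ^ 2))
    (hdloc : dloc = loc - avg)
    (havg_pos : 0 < avg) (havg_lt : avg < ρc)
    (α : ℝ → ℝ)
    (hα : ∀ R, α R = t₀ + Real.sqrt ((4 / 9) * (R ^ 3 / (2 * G * m R) - Δ))) :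
    m R₁ * |deriv α R₁| / deriv m R₁ ≥ 2 * Real.sqrt Δ / 3 ↔
      |dloc| / loc ≥ 2 * Real.sqrt ((avg / ρc) * (1 - avg / ρc)) :=
  shell_crossing_condition_equivalent_general G Δ t₀ R₁ hG hΔ hR₁ m hm hmpos hdm ρc avg loc dloc hρc
    havg hloc hdloc havg_lt α hα
end

section
/- For any continuous, nonnegative, compactly supported ϱ : [0,∞) → ℝ not identically zero, with m(R) = 4π∫₀^R s²ϱ(s)ds, there exists a finite open interval (R₁,R₂) on which ϱ > 0 and with ϱ(R₂) = 0, such that m is strictly increasing on (R₁,R₂) and lim_{R→R₂⁻} ϱ(R) = 0 while ϱ̄(R) = 3m(R)/(4πR³) is bounded away from 0 near R₂. -/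
open Real Filter

theorem exists_interval_density_vanishing
    (ϱ : ℝ → ℝ) (hcont : Continuous ϱ) (hnonneg : ∀ s, 0 ≤ ϱ s)
    (hsupp : HasCompactSupport ϱ) (hnontriv : ∃ R > (0:ℝ), ϱ R ≠ 0)
    (m : ℝ → ℝ)
    (hm : ∀ R, m R = 4 * Real.pi * ∫ s in (0:ℝ)..R, s ^ 2 * ϱ s) :
    ∃ R₁ R₂ : ℝ, 0 < R₁ ∧ R₁ < R₂ ∧
      (∀ R ∈ Set.Ioo R₁ R₂, 0 < ϱ R) ∧
      ϱ R₂ = 0 ∧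
      StrictMonoOn m (Set.Ioo R₁ R₂) ∧
      Tendsto ϱ (nhdsWithin R₂ (Set.Iio R₂)) (nhds 0) ∧
      ∃ c > (0:ℝ), ∀ R ∈ Set.Ioo R₁ R₂, c ≤ 3 * m R / (4 * Real.pi * R ^ 3) := by
  obtain ⟨R₀, hR₀pos, hR₀ne⟩ := hnontriv
  have hR₀ : 0 < ϱ R₀ := lt_of_le_of_ne (hnonneg R₀) (Ne.symm hR₀ne)
  -- zeros above R₀
  obtain ⟨K, hKpos, hK⟩ := hsupp.exists_pos_le_norm
  set S : Set ℝ := {s | R₀ ≤ s ∧ ϱ s = 0} with hS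
  have hSne : S.Nonempty := by
    refine ⟨max R₀ K, le_max_left _ _, hK _ ?_⟩
    simpa [Real.norm_eq_abs, abs_of_nonneg (le_trans hKpos.le (le_max_right R₀ K))] using
      le_max_right R₀ K
  have hSbdd : BddBelow S := ⟨R₀, fun s hs => hs.1⟩
  have hSclosed : IsClosed S := by
    have : S = Set.Ici R₀ ∩ ϱ ⁻¹' {0} := by
      ext s; simp [hS, Set.mem_setOf_eq, and_comm]
    rw [this]
    exact isClosed_Ici.inter (isClosed_singleton.preimage hcont)
  set R₂ := sInf S with hR₂def
  have hR₂mem : R₂ ∈ S := hSclosed.csInf_mem hSne hSbdd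
  have hϱR₂ : ϱ R₂ = 0 := hR₂mem.2
  have hR₀R₂ : R₀ < R₂ := lt_of_le_of_ne hR₂mem.1 (by
    intro h; rw [← h] at hϱR₂; exact hR₀ne hϱR₂)
  have hpos : ∀ s, R₀ ≤ s → s < R₂ → 0 < ϱ s := by
    intro s hs1 hs2
    rcases lt_or_eq_of_le (hnonneg s) with h | h
    · exact h
    · exact absurd (csInf_le hSbdd ⟨hs1, h.symm⟩) (not_le.mpr hs2)
  set R₁ := (R₀ + R₂) / 2 with hR₁def
  have hR₀R₁ : R₀ < R₁ := by simp [hR₁def]; linarith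
  have hR₁R₂ : R₁ < R₂ := by simp [hR₁def]; linarith
  have hR₁pos : 0 < R₁ := hR₀pos.trans hR₀R₁
  have hR₂pos : 0 < R₂ := hR₁pos.trans hR₁R₂
  have hint : ∀ a b : ℝ, IntervalIntegrable (fun s => s ^ 2 * ϱ s) MeasureTheory.volume a b :=
    fun a b => ((continuous_pow 2).mul hcont).intervalIntegrable a b
  -- monotonicity of m
  have hmono : ∀ a b : ℝ, 0 ≤ a → a ≤ b → m a ≤ m b := by
    intro a b ha hab
    rw [hm a, hm b]
    apply mul_le_mul_of_nonneg_left _ (by positivity)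
    apply intervalIntegral.integral_mono_interval le_rfl ha hab
    · filter_upwards with s
      exact mul_nonneg (sq_nonneg s) (hnonneg s)
    · exact hint 0 b
  -- strict increments
  have hstrict : ∀ a b : ℝ, 0 < a → a < b → (∀ x ∈ Set.Ioo a b, 0 < ϱ x) → m a < m b := by
    intro a b ha hab hp
    rw [hm a, hm b]
    have hsplit : (∫ s in (0:ℝ)..a, s ^ 2 * ϱ s) + (∫ s in a..b, s ^ 2 * ϱ s)
        = ∫ s in (0:ℝ)..b, s ^ 2 * ϱ s :=
      intervalIntegral.integral_add_adjacent_intervals (hint 0 a) (hint a b)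
    have hmid : 0 < ∫ s in a..b, s ^ 2 * ϱ s := by
      apply intervalIntegral.intervalIntegral_pos_of_pos_on (hint a b) _ hab
      intro x hx
      exact mul_pos (pow_pos (ha.trans hx.1) 2) (hp x hx)
    have : (∫ s in (0:ℝ)..a, s ^ 2 * ϱ s) < ∫ s in (0:ℝ)..b, s ^ 2 * ϱ s := by linarith
    exact mul_lt_mul_of_pos_left this (by positivity)
  have hposIoo : ∀ R ∈ Set.Ioo R₁ R₂, 0 < ϱ R :=
    fun R hR => hpos R (hR₀R₁.le.trans hR.1.le) hR.2
  refine ⟨R₁, R₂, hR₁pos, hR₁R₂, hposIoo, hϱR₂, ?_, ?_, ?_⟩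
  · -- strict mono on
    intro a ha b hb hab
    exact hstrict a b (hR₁pos.trans ha.1) hab
      (fun x hx => hposIoo x ⟨ha.1.trans hx.1, hx.2.trans hb.2⟩)
  · -- tendsto
    have := hcont.tendsto R₂
    rw [hϱR₂] at this
    exact this.mono_left nhdsWithin_le_nhds
  · -- density bound
    have hmR₁ : 0 < m R₁ := by
      have h0 : m R₀ ≤ m R₁ := hmono R₀ R₁ hR₀pos.le hR₀R₁.le
      have key : m R₀ < m R₁ := hstrict R₀ R₁ hR₀pos hR₀R₁
        (fun x hx => hpos x hx.1.le (hx.2.trans hR₁R₂))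
      have hmR₀ : 0 ≤ m R₀ := by
        rw [hm R₀]
        apply mul_nonneg (by positivity)
        apply intervalIntegral.integral_nonneg hR₀pos.le
        intro s hs
        exact mul_nonneg (sq_nonneg s) (hnonneg s)
      linarith
    refine ⟨3 * m R₁ / (4 * Real.pi * R₂ ^ 3), by positivity, ?_⟩
    intro R hR
    have hRpos : 0 < R := hR₁pos.trans hR.1
    have hmR : m R₁ ≤ m R := hmono R₁ R hR₁pos.le hR.1.le
    apply div_le_div₀ (by linarith [hmono R₁ R hR₁pos.le hR.1.le]) (by linarith)
      (by positivity)
    have : R ^ 3 ≤ R₂ ^ 3 := pow_le_pow_left₀ hRpos.le hR.2.le 3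
    nlinarith [Real.pi_pos]
end
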